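/- Let g ≥ 1 and let σ : ℂ^g → ℂ be infinitely complex-differentiable. For i ∈ {1,…,g} define the operator D_i acting on infinitely differentiable functions f(u,v,w) of three variables u, v, w ∈ ℂ^g as the determinant expansion D_i = ∂_{v_i}∂²_{w_i} − ∂_{w_i}∂²_{v_i} − ∂_{u_i}∂²_{w_i} + ∂_{w_i}∂²_{u_i} + ∂_{u_i}∂²_{v_i} − ∂_{v_i}∂²_{u_i}. For i, j ∈ {1,…,g} and u with σ(u) ≠ 0, set Ξ_{i,j}(u) = (1/σ(u)³) · (D_i D_j [σ(u)σ(v)σ(w)])|_{w=v=u}. Then for every u with σ(u) ≠ 0, Ξ_{i,j}(u) = 6(℘_{ij}(u)℘_{iijj}(u) − ℘_{iij}(u)℘_{ijj}(u) − 2℘_{ij}(u)³). -/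

import Mathlib

noncomputable section

/-- Partial derivative in the `i`-th coordinate direction. -/
def pd {g : ℕ} (i : Fin g) (f : (Fin g → ℂ) → ℂ) : (Fin g → ℂ) → ℂ :=
  fun u => fderiv ℂ f u (Pi.single i 1)

/-- Iterated partial derivative along a list of coordinate indices. -/
def pdIter {g : ℕ} (l : List (Fin g)) (f : (Fin g → ℂ) → ℂ) : (Fin g → ℂ) → ℂ :=
  l.foldl (fun h i => pd i h) f

/-- The 2-index Kleinian ℘-function ℘_{ij} = (σ_i σ_j − σ σ_{ij}) / σ². -/
def wp2 {g : ℕ} (σ : (Fin g → ℂ) → ℂ) (i j : Fin g) : (Fin g → ℂ) → ℂ :=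
  fun u => (pd i σ u * pd j σ u - σ u * pd j (pd i σ) u) / σ u ^ 2

/-- The m-index Kleinian ℘-function ℘_{i j k₁ ⋯ k_r}, obtained from ℘_{ij} by
successively differentiating with respect to the coordinates in `ks`. -/
def wp {g : ℕ} (σ : (Fin g → ℂ) → ℂ) (i j : Fin g) (ks : List (Fin g)) :
    (Fin g → ℂ) → ℂ :=
  ks.foldl (fun h k => pd k h) (wp2 σ i j)

/-- Partial derivative of a three-variable function in its first argument. -/
def pd3₁ {g : ℕ} (i : Fin g) (F : (Fin g → ℂ) → (Fin g → ℂ) → (Fin g → ℂ) → ℂ) :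
    (Fin g → ℂ) → (Fin g → ℂ) → (Fin g → ℂ) → ℂ :=
  fun u v w => fderiv ℂ (fun x => F x v w) u (Pi.single i 1)

/-- Partial derivative of a three-variable function in its second argument. -/
def pd3₂ {g : ℕ} (i : Fin g) (F : (Fin g → ℂ) → (Fin g → ℂ) → (Fin g → ℂ) → ℂ) :
    (Fin g → ℂ) → (Fin g → ℂ) → (Fin g → ℂ) → ℂ :=
  fun u v w => fderiv ℂ (fun y => F u y w) v (Pi.single i 1)

/-- Partial derivative of a three-variable function in its third argument. -/
def pd3₃ {g : ℕ} (i : Fin g) (F : (Fin g → ℂ) → (Fin g → ℂ) → (Fin g → ℂ) → ℂ) :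
    (Fin g → ℂ) → (Fin g → ℂ) → (Fin g → ℂ) → ℂ :=
  fun u v w => fderiv ℂ (fun z => F u v z) w (Pi.single i 1)

/-- The determinant operator
D_i = ∂_{v_i}∂²_{w_i} − ∂_{w_i}∂²_{v_i} − ∂_{u_i}∂²_{w_i} + ∂_{w_i}∂²_{u_i}
      + ∂_{u_i}∂²_{v_i} − ∂_{v_i}∂²_{u_i}. -/
def Dop {g : ℕ} (i : Fin g) (F : (Fin g → ℂ) → (Fin g → ℂ) → (Fin g → ℂ) → ℂ) :
    (Fin g → ℂ) → (Fin g → ℂ) → (Fin g → ℂ) → ℂ :=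
  fun u v w =>
    pd3₂ i (pd3₃ i (pd3₃ i F)) u v w - pd3₃ i (pd3₂ i (pd3₂ i F)) u v w
      - pd3₁ i (pd3₃ i (pd3₃ i F)) u v w + pd3₃ i (pd3₁ i (pd3₁ i F)) u v w
      + pd3₁ i (pd3₂ i (pd3₂ i F)) u v w - pd3₂ i (pd3₁ i (pd3₁ i F)) u v w

/-!
Applied to a product `p(x) q(y) r(z)`, the operator `D_k` produces the signed sum over
`π ∈ S₃` of `∂_k^{π 0} p (x) · ∂_k^{π 1} q (y) · ∂_k^{π 2} r (z)`, again a sum of products.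
Hence `D_i D_j [σ(x)σ(y)σ(z)]` is a double signed sum over `S₃ × S₃`, which on the diagonal
`x = y = z = u` collapses to `3! · det (∂_i^a ∂_j^b σ (u))_{a, b ≤ 2}`. Writing
`℘_{ij} = (σ_i σ_j - σ σ_{ij}) / σ²` and differentiating twice along `u_j` identifies this
determinant divided by `σ³` with `℘_{ij} ℘_{iijj} - ℘_{iij} ℘_{ijj} - 2 ℘_{ij}³`.
-/

open Equiv Filter Topology

theorem sum_sign_mul_fin_three {R : Type*} [CommRing R] (A B C : ℕ → R) :
    ∑ π : Perm (Fin 3), (Perm.sign π : R) * (A (π 0) * B (π 1) * C (π 2))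
      = A 0 * B 1 * C 2 - A 0 * B 2 * C 1 - A 1 * B 0 * C 2
        + A 1 * B 2 * C 0 + A 2 * B 0 * C 1 - A 2 * B 1 * C 0 := by
  have h := Matrix.det_apply' (Matrix.of fun a b : Fin 3 => ![A a, B a, C a] b)
  rw [Matrix.det_fin_three] at h
  simp only [Matrix.of_apply, Fin.isValue, Fin.coe_ofNat_eq_mod, Nat.zero_mod, Nat.one_mod,
    Nat.mod_succ, Matrix.cons_val_zero, Matrix.cons_val_one, Matrix.cons_val, Fin.prod_univ_three,
    mul_assoc] at h ⊢
  linear_combination -h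

theorem sum_sign_mul_sign_mul_prod_eq_factorial_mul_det {R : Type*} [CommRing R] {n : ℕ}
    (B : Matrix (Fin n) (Fin n) R) :
    ∑ π : Perm (Fin n), ∑ τ : Perm (Fin n), (Perm.sign π : R) * Perm.sign τ * ∏ r, B (π r) (τ r)
      = n.factorial * B.det := by
  have h_inner : ∀ π : Perm (Fin n),
      ∑ τ : Perm (Fin n), (Perm.sign π : R) * Perm.sign τ * ∏ r, B (π r) (τ r) = B.det := by
    intro π
    rw [← B.det_transpose, Matrix.det_apply']
    refine Fintype.sum_equiv (Equiv.mulRight π⁻¹) _ _ fun τ => ?_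
    conv_rhs => rw [← Equiv.prod_comp π]
    simp only [Equiv.coe_mulRight, Perm.sign_mul, Perm.sign_inv, Units.val_mul, Int.cast_mul,
      Matrix.transpose_apply, Perm.mul_apply, Perm.coe_inv, Equiv.symm_apply_apply]
    ring
  simp [h_inner, Finset.card_univ, Fintype.card_perm]

section PartialDerivatives

variable {g : ℕ} {k l : Fin g} {f h : (Fin g → ℂ) → ℂ} {x : Fin g → ℂ}

@[fun_prop]
theorem contDiff_pd (hf : ContDiff ℂ ⊤ f) : ContDiff ℂ ⊤ (fun x => pd k f x) :=
  (hf.fderiv_right le_top).clm_apply contDiff_const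

theorem contDiff_iterate_pd (hf : ContDiff ℂ ⊤ f) (n : ℕ) : ContDiff ℂ ⊤ ((pd k)^[n] f) := by
  induction n with
  | zero => exact hf
  | succ n ih => rw [Function.iterate_succ_apply']; exact contDiff_pd ih

theorem pd_comm (hf : ContDiff ℂ 2 f) : pd k (pd l f) = pd l (pd k f) := by
  funext x
  have hd : DifferentiableAt ℂ (fderiv ℂ f) x :=
    (hf.fderiv_right (m := 1) le_rfl).differentiable one_ne_zero x
  have hcomp : ∀ v w, fderiv ℂ (fun y => fderiv ℂ f y v) x w = fderiv ℂ (fderiv ℂ f) x w v := by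
    intro v w
    rw [fderiv_clm_apply hd (differentiableAt_const v)]
    simp
  change fderiv ℂ (fun y => fderiv ℂ f y (Pi.single l 1)) x (Pi.single k 1)
    = fderiv ℂ (fun y => fderiv ℂ f y (Pi.single k 1)) x (Pi.single l 1)
  rw [hcomp, hcomp]
  exact hf.contDiffAt.isSymmSndFDerivAt (by simp) _ _

theorem pd_iterate_pd_comm (hf : ContDiff ℂ ⊤ f) (n : ℕ) :
    pd k ((pd l)^[n] f) = (pd l)^[n] (pd k f) := by
  induction n with
  | zero => rfl
  | succ n ih =>
    rw [Function.iterate_succ_apply', Function.iterate_succ_apply',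
      pd_comm ((contDiff_iterate_pd hf n).of_le le_top), ih]

theorem iterate_pd_comm (hf : ContDiff ℂ ⊤ f) (m n : ℕ) :
    (pd k)^[m] ((pd l)^[n] f) = (pd l)^[n] ((pd k)^[m] f) := by
  induction m generalizing f with
  | zero => rfl
  | succ m ih =>
    rw [Function.iterate_succ_apply, Function.iterate_succ_apply, pd_iterate_pd_comm hf,
      ih (contDiff_pd hf)]

theorem pd_const (c : ℂ) : pd k (fun _ => c) = 0 := by
  funext x
  simp [pd]

theorem pd_fun_add (hf : Differentiable ℂ f) (hh : Differentiable ℂ h) :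
    pd k (fun x => f x + h x) = fun x => pd k f x + pd k h x := by
  funext x
  simp [pd, fderiv_fun_add (hf x) (hh x)]

theorem pd_fun_sub (hf : Differentiable ℂ f) (hh : Differentiable ℂ h) :
    pd k (fun x => f x - h x) = fun x => pd k f x - pd k h x := by
  funext x
  simp [pd, fderiv_fun_sub (hf x) (hh x)]

theorem pd_fun_mul (hf : Differentiable ℂ f) (hh : Differentiable ℂ h) :
    pd k (fun x => f x * h x) = fun x => pd k f x * h x + f x * pd k h x := by
  funext x
  simp [pd, fderiv_fun_mul (hf x) (hh x)]
  ring

theorem pd_fun_pow (hf : Differentiable ℂ f) (n : ℕ) :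
    pd k (fun x => f x ^ n) = fun x => n * f x ^ (n - 1) * pd k f x := by
  funext x
  simp [pd, fderiv_fun_pow n (hf x)]

theorem pd_div (hf : DifferentiableAt ℂ f x) (hh : DifferentiableAt ℂ h x) (hx : h x ≠ 0) :
    pd k (fun x => f x / h x) x = (pd k f x * h x - f x * pd k h x) / h x ^ 2 := by
  have hinv : HasFDerivAt (fun x => (h x)⁻¹) (-(h x ^ 2)⁻¹ • fderiv ℂ h x) x :=
    (hasDerivAt_inv hx).comp_hasFDerivAt x hh.hasFDerivAt
  simp only [div_eq_mul_inv, pd, fderiv_fun_mul hf hinv.differentiableAt, hinv.fderiv]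
  simp
  field_simp
  ring

theorem pd_pd_div (hf : Differentiable ℂ f) (hh : Differentiable ℂ h) (hx : h x ≠ 0) :
    pd l (pd k (fun x => f x / h x)) x
      = pd l (fun x => (pd k f x * h x - f x * pd k h x) / h x ^ 2) x := by
  have hne : ∀ᶠ y in 𝓝 x, h y ≠ 0 := hh.continuous.continuousAt.eventually_ne hx
  have heq : pd k (fun x => f x / h x) =ᶠ[𝓝 x]
      fun x => (pd k f x * h x - f x * pd k h x) / h x ^ 2 := by
    filter_upwards [hne] with y hy
    exact pd_div (hf y) (hh y) hy
  simp only [pd, heq.fderiv_eq]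

end PartialDerivatives

section TripleSums

variable {g : ℕ} {ι : Type*} [Fintype ι]

def tripleSum (c : ι → ℂ) (p q r : ι → (Fin g → ℂ) → ℂ) :
    (Fin g → ℂ) → (Fin g → ℂ) → (Fin g → ℂ) → ℂ :=
  fun x y z => ∑ t, c t * p t x * q t y * r t z

variable (k : Fin g) {c : ι → ℂ} {p q r : ι → (Fin g → ℂ) → ℂ}

theorem pd3₁_tripleSum (hp : ∀ t, Differentiable ℂ (p t)) :
    pd3₁ k (tripleSum c p q r) = tripleSum c (fun t => pd k (p t)) q r := by
  funext x y z
  simp only [pd3₁, tripleSum, pd]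
  rw [fderiv_fun_sum fun t _ => by fun_prop, sum_apply]
  refine Finset.sum_congr rfl fun t _ => ?_
  simp (disch := fun_prop) only [fderiv_mul_const, fderiv_const_mul, smul_apply, smul_eq_mul]
  ring

theorem pd3₂_tripleSum (hq : ∀ t, Differentiable ℂ (q t)) :
    pd3₂ k (tripleSum c p q r) = tripleSum c p (fun t => pd k (q t)) r := by
  funext x y z
  simp only [pd3₂, tripleSum, pd]
  rw [fderiv_fun_sum fun t _ => by fun_prop, sum_apply]
  refine Finset.sum_congr rfl fun t _ => ?_
  simp (disch := fun_prop) only [fderiv_mul_const, fderiv_const_mul, smul_apply, smul_eq_mul]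
  ring

theorem pd3₃_tripleSum (hr : ∀ t, Differentiable ℂ (r t)) :
    pd3₃ k (tripleSum c p q r) = tripleSum c p q (fun t => pd k (r t)) := by
  funext x y z
  simp only [pd3₃, tripleSum, pd]
  rw [fderiv_fun_sum fun t _ => by fun_prop, sum_apply]
  refine Finset.sum_congr rfl fun t _ => ?_
  simp (disch := fun_prop) only [fderiv_const_mul, smul_apply, smul_eq_mul]

theorem dop_tripleSum (hp : ∀ t, ContDiff ℂ 2 (p t)) (hq : ∀ t, ContDiff ℂ 2 (q t))
    (hr : ∀ t, ContDiff ℂ 2 (r t)) :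
    Dop k (tripleSum c p q r) = tripleSum (fun s : ι × Perm (Fin 3) => c s.1 * Perm.sign s.2)
      (fun s => (pd k)^[s.2 0] (p s.1)) (fun s => (pd k)^[s.2 1] (q s.1))
      (fun s => (pd k)^[s.2 2] (r s.1)) := by
  have hd₀ : ∀ f : (Fin g → ℂ) → ℂ, ContDiff ℂ 2 f → Differentiable ℂ f :=
    fun f hf => hf.differentiable (by norm_num)
  have hd₁ : ∀ f : (Fin g → ℂ) → ℂ, ContDiff ℂ 2 f → Differentiable ℂ (pd k f) := fun f hf =>
    ((hf.fderiv_right (m := 1) (by norm_num)).clm_apply contDiff_const).differentiable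
      (by norm_num)
  funext x y z
  simp only [Dop]
  simp only [pd3₁_tripleSum k fun t => hd₀ _ (hp t), pd3₁_tripleSum k fun t => hd₁ _ (hp t),
    pd3₂_tripleSum k fun t => hd₀ _ (hq t), pd3₂_tripleSum k fun t => hd₁ _ (hq t),
    pd3₃_tripleSum k fun t => hd₀ _ (hr t), pd3₃_tripleSum k fun t => hd₁ _ (hr t)]
  simp only [tripleSum, Fintype.sum_prod_type, ← Finset.sum_sub_distrib, ← Finset.sum_add_distrib]
  refine Finset.sum_congr rfl fun t _ => ?_
  have hsum : ∑ π : Perm (Fin 3), c t * Perm.sign π * (pd k)^[π 0] (p t) x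
      * (pd k)^[π 1] (q t) y * (pd k)^[π 2] (r t) z
      = c t * ∑ π : Perm (Fin 3), (Perm.sign π : ℂ)
        * ((pd k)^[π 0] (p t) x * (pd k)^[π 1] (q t) y * (pd k)^[π 2] (r t) z) := by
    rw [Finset.mul_sum]
    exact Finset.sum_congr rfl fun π _ => by ring
  rw [hsum, sum_sign_mul_fin_three (fun n => (pd k)^[n] (p t) x) (fun n => (pd k)^[n] (q t) y)
    (fun n => (pd k)^[n] (r t) z)]
  simp only [Function.iterate_zero, Function.iterate_succ, id, Function.comp_apply]
  ring

end TripleSums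

theorem dop_dop_prod_diag_eq_det {g : ℕ} {σ : (Fin g → ℂ) → ℂ} (hσ : ContDiff ℂ ⊤ σ) (i j : Fin g)
    (u : Fin g → ℂ) :
    Dop i (Dop j (fun x y z => σ x * σ y * σ z)) u u u
      = 6 * (Matrix.of fun a b : Fin 3 => (pd i)^[a] ((pd j)^[b] σ) u).det := by
  have hσσσ : (fun x y z => σ x * σ y * σ z)
      = tripleSum (fun _ : Unit => 1) (fun _ => σ) (fun _ => σ) (fun _ => σ) := by
    funext x y z
    simp [tripleSum]
  have hσ₂ : ContDiff ℂ 2 σ := hσ.of_le le_top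
  have hσⱼ : ∀ n, ContDiff ℂ 2 ((pd j)^[n] σ) := fun n => (contDiff_iterate_pd hσ n).of_le le_top
  rw [hσσσ, dop_tripleSum j (fun _ => hσ₂) (fun _ => hσ₂) (fun _ => hσ₂),
    dop_tripleSum i (fun _ => hσⱼ _) (fun _ => hσⱼ _) (fun _ => hσⱼ _),
    show (6 : ℂ) = (3).factorial by norm_num, ← sum_sign_mul_sign_mul_prod_eq_factorial_mul_det]
  simp only [tripleSum, Fintype.sum_prod_type, Fintype.sum_unique, Fin.prod_univ_three,
    Matrix.of_apply]
  rw [Finset.sum_comm]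
  exact Finset.sum_congr rfl fun π _ => Finset.sum_congr rfl fun τ _ => by ring

theorem det_iterate_pd_div_pow_three_eq_wp {g : ℕ} {σ : (Fin g → ℂ) → ℂ} (hσ : ContDiff ℂ ⊤ σ)
    (i j : Fin g) {u : Fin g → ℂ} (hu : σ u ≠ 0) :
    (Matrix.of fun a b : Fin 3 => (pd j)^[b] ((pd i)^[a] σ) u).det / σ u ^ 3
      = wp2 σ i j u * wp σ i i [j, j] u - wp σ i i [j] u * wp σ i j [j] u
          - 2 * wp2 σ i j u ^ 3 := by
  have hd : ∀ f : (Fin g → ℂ) → ℂ, ContDiff ℂ ⊤ f → Differentiable ℂ f :=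
    fun f hf => hf.differentiable (by simp)
  simp only [wp, List.foldl]
  unfold wp2
  rw [pd_pd_div (hd _ (by fun_prop)) (hd _ (by fun_prop)) (pow_ne_zero 2 hu), Matrix.det_fin_three]
  simp only [Matrix.of_apply, Fin.val_zero, Fin.val_one, Fin.val_two, Function.iterate_zero,
    Function.iterate_succ, id, Function.comp_apply]
  simp (disch := first
      | exact (hd _ (by fun_prop)).differentiableAt
      | exact hd _ (by fun_prop)
      | simp [hu]) only
    [pd_div, pd_fun_add, pd_fun_sub, pd_fun_mul, pd_fun_pow, pd_const, Pi.zero_apply]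
  field_simp
  ring

theorem statement7_general {g : ℕ} (σ : (Fin g → ℂ) → ℂ)
    (hσ : ContDiff ℂ ⊤ σ) (i j : Fin g) (u : Fin g → ℂ) (hu : σ u ≠ 0) :
    (1 / σ u ^ 3) * Dop i (Dop j (fun x y z => σ x * σ y * σ z)) u u u
      = 6 * (wp2 σ i j u * wp σ i i [j, j] u - wp σ i i [j] u * wp σ i j [j] u
          - 2 * wp2 σ i j u ^ 3) := by
  have hcomm : (Matrix.of fun a b : Fin 3 => (pd i)^[a] ((pd j)^[b] σ) u)
      = Matrix.of fun a b : Fin 3 => (pd j)^[b] ((pd i)^[a] σ) u := by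
    ext a b
    rw [Matrix.of_apply, Matrix.of_apply, iterate_pd_comm hσ]
  rw [dop_dop_prod_diag_eq_det hσ, hcomm, ← det_iterate_pd_div_pow_three_eq_wp hσ i j hu]
  ring

/-- the function Ξ_{i,j} = (1/σ(u)³)·(D_iD_j[σ(u)σ(v)σ(w)])|_{w=v=u}
satisfies Ξ_{i,j} = 6(℘_{ij}℘_{iijj} − ℘_{iij}℘_{ijj} − 2℘_{ij}³). -/
theorem statement7 {g : ℕ} (hg : 1 ≤ g) (σ : (Fin g → ℂ) → ℂ)
    (hσ : ContDiff ℂ ⊤ σ) (i j : Fin g) (u : Fin g → ℂ) (hu : σ u ≠ 0) :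
    (1 / σ u ^ 3) * Dop i (Dop j (fun x y z => σ x * σ y * σ z)) u u u
      = 6 * (wp2 σ i j u * wp σ i i [j, j] u - wp σ i i [j] u * wp σ i j [j] u
          - 2 * wp2 σ i j u ^ 3) :=
  statement7_general σ hσ i j u hu
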